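/- Let R be a finite chain ring with residue field 𝔽_q and index e, and let φ : R → 𝔽_q^{q^{e-1}} be the generalized Gray map defined via the γ-adic expansion r = Σ r_i γ^i by φ(r) = (r̄_0,…,r̄_{e-1})·(Y; 𝟙), where Y is the (e−1)×q^{e-1} matrix whose columns are all vectors in 𝔽_q^{e-1} and 𝟙 is the all-ones row. Then for every r ∈ R, the Hamming weight of φ(r) equals the homogeneous weight of r: it is 0 if r = 0, q^{e-1} if r is a nonzero element of ⟨γ^{e-1}⟩, and (q−1)q^{e-2} otherwise. -/
import Mathlib


open Classical

-- Structure: every nonzero element is unit * γ^m with m ≤ s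
lemma aux_struct {R : Type*} [CommRing R] [IsLocalRing R] (γ : R) (s : ℕ)
    (hmax : IsLocalRing.maximalIdeal R = Ideal.span {γ})
    (hnil : γ ^ (s + 1) = 0) (x : R) (hx : x ≠ 0) :
    ∃ m ≤ s, ∃ u : R, IsUnit u ∧ x = u * γ ^ m := by
  classical
  set P : ℕ → Prop := fun m => γ ^ m ∣ x with hP
  have hP0 : P 0 := ⟨x, by simp⟩
  set m := Nat.findGreatest P (s + 1) with hm
  have hPm : P m := Nat.findGreatest_spec (Nat.zero_le _) hP0
  have hmle : m ≤ s + 1 := Nat.findGreatest_le _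
  have hms : m ≤ s := by
    rcases Nat.lt_or_ge m (s+1) with h | h
    · omega
    · exfalso
      have : m = s + 1 := le_antisymm hmle h
      rcases hPm with ⟨y, hy⟩
      rw [this, hnil, zero_mul] at hy
      exact hx hy
  rcases hPm with ⟨v, hv⟩
  have hvu : IsUnit v := by
    by_contra hvn
    have hvm : v ∈ IsLocalRing.maximalIdeal R := (IsLocalRing.mem_maximalIdeal v).mpr hvn
    rw [hmax, Ideal.mem_span_singleton] at hvm
    rcases hvm with ⟨w, hw⟩
    have : P (m + 1) := ⟨w, by rw [hv, hw]; ring⟩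
    exact Nat.findGreatest_is_greatest (P := P) (n := s + 1) (by omega) (by omega) this
  exact ⟨m, hms, v, hvu, by rw [hv]; ring⟩

-- Annihilator: if x * γ^k = 0 with k ≤ s then x ∈ ⟨γ⟩
lemma aux_ann {R : Type*} [CommRing R] [IsLocalRing R] (γ : R) (s : ℕ)
    (hmax : IsLocalRing.maximalIdeal R = Ideal.span {γ})
    (hnil : γ ^ (s + 1) = 0) (hne : γ ^ s ≠ 0) (x : R) (k : ℕ)
    (hk : k ≤ s) (h : x * γ ^ k = 0) : x ∈ Ideal.span ({γ} : Set R) := by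
  rcases eq_or_ne x 0 with rfl | hx
  · exact Ideal.zero_mem _
  rcases aux_struct γ s hmax hnil x hx with ⟨m, hms, u, hu, hxu⟩
  have hγmk : γ ^ (m + k) = 0 := by
    rcases hu with ⟨u', hu'⟩
    have : (u : R) * γ ^ (m + k) = 0 := by
      rw [pow_add, ← mul_assoc, ← hxu, h]
    calc γ ^ (m+k) = ↑u'⁻¹ * (u * γ ^ (m+k)) := by
          rw [← mul_assoc, ← hu']; simp [← Units.val_mul]
      _ = 0 := by rw [this, mul_zero]
  have hm1 : 1 ≤ m := by
    by_contra hm0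
    have hm : m = 0 := by omega
    have : γ ^ s = 0 := pow_eq_zero_of_le (by omega) (hm ▸ hγmk)
    exact hne this
  rw [Ideal.mem_span_singleton, hxu]
  exact Dvd.dvd.mul_left (dvd_pow_self γ (by omega : m ≠ 0)) u

-- Uniqueness of digit expansions
lemma aux_unique {R K : Type*} [CommRing R] [IsLocalRing R] [Field K]
    (γ : R) (s : ℕ)
    (hmax : IsLocalRing.maximalIdeal R = Ideal.span {γ})
    (hnil : γ ^ (s + 1) = 0) (hne : γ ^ s ≠ 0)
    (T : K → R)
    (hTrep : ∀ x y : K, T x - T y ∈ Ideal.span ({γ} : Set R) → x = y)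
    (a b : Fin (s + 1) → K)
    (h : ∑ i : Fin (s + 1), T (a i) * γ ^ (i : ℕ)
       = ∑ i : Fin (s + 1), T (b i) * γ ^ (i : ℕ)) : a = b := by
  have key : ∀ n : ℕ, ∀ hn : n < s + 1, a ⟨n, hn⟩ = b ⟨n, hn⟩ := by
    intro n
    induction n using Nat.strong_induction_on with
    | _ n IH =>
      intro hn
      set i : Fin (s + 1) := ⟨n, hn⟩ with hi
      set S := Ideal.span ({γ ^ (n + 1)} : Set R) with hS
      have hterm : ∀ j : Fin (s + 1), j ≠ i →
          (T (a j) - T (b j)) * γ ^ (j : ℕ) ∈ S := by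
        intro j hj
        rcases Nat.lt_or_ge (j : ℕ) n with hlt | hge
        · have : a j = b j := by
            have := IH j hlt j.isLt
            simpa [Fin.ext_iff] using this
          rw [this, sub_self, zero_mul]; exact S.zero_mem
        · have hgt : n < (j : ℕ) := by
            rcases Nat.lt_or_ge n (j : ℕ) with h' | h'
            · exact h'
            · exfalso; apply hj; exact Fin.ext (show (j : ℕ) = n by omega)
          rw [Ideal.mem_span_singleton]
          exact Dvd.dvd.mul_left (pow_dvd_pow γ (by omega)) _
      have hsum0 : ∑ j : Fin (s + 1), (T (a j) - T (b j)) * γ ^ (j : ℕ) = 0 := by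
        simp only [sub_mul, Finset.sum_sub_distrib, h, sub_self]
      have hmem : (T (a i) - T (b i)) * γ ^ (i : ℕ) ∈ S := by
        have hsplit := Finset.add_sum_erase Finset.univ
          (fun j : Fin (s + 1) => (T (a j) - T (b j)) * γ ^ (j : ℕ)) (Finset.mem_univ i)
        have hrest : ∑ j ∈ Finset.univ.erase i,
            (T (a j) - T (b j)) * γ ^ (j : ℕ) ∈ S :=
          Ideal.sum_mem _ (fun j hj => hterm j (Finset.ne_of_mem_erase hj))
        have hsum0' : (T (a i) - T (b i)) * γ ^ (i : ℕ)
            + ∑ j ∈ Finset.univ.erase i, (T (a j) - T (b j)) * γ ^ (j : ℕ) = 0 := by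
          rw [hsplit]; exact hsum0
        rw [eq_neg_of_add_eq_zero_left hsum0']
        exact S.neg_mem hrest
      rw [hS, Ideal.mem_span_singleton] at hmem
      rcases hmem with ⟨c, hc⟩
      have hzero : (T (a i) - T (b i) - γ * c) * γ ^ n = 0 := by
        have hin : (i : ℕ) = n := rfl
        rw [hin] at hc
        calc (T (a i) - T (b i) - γ * c) * γ ^ n
            = (T (a i) - T (b i)) * γ ^ n - γ ^ (n + 1) * c := by ring
          _ = 0 := by rw [← hc]; ring
      have hmem2 : T (a i) - T (b i) - γ * c ∈ Ideal.span ({γ} : Set R) :=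
        aux_ann γ s hmax hnil hne _ n (by omega) hzero
      have : T (a i) - T (b i) ∈ Ideal.span ({γ} : Set R) := by
        have hγc : γ * c ∈ Ideal.span ({γ} : Set R) :=
          Ideal.mem_span_singleton.mpr ⟨c, rfl⟩
        have := Ideal.add_mem _ hmem2 hγc
        simpa using this
      exact hTrep _ _ this
  funext j
  have := key (j : ℕ) j.isLt
  simpa using this

lemma aux_filter_equiv {α β : Type*} [Fintype α] [Fintype β] [DecidableEq β]
    (e : α ≃ β) (P : β → Prop) [DecidablePred P] :
    (Finset.univ.filter fun x => P (e x)).card = (Finset.univ.filter P).card := by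
  apply Finset.card_bij' (fun x _ => e x) (fun y _ => e.symm y) <;> simp

lemma aux_count {K : Type*} [Field K] [Fintype K] [DecidableEq K] {s q : ℕ}
    (hq : Fintype.card K = q) (a : Fin s → K) (ha : a ≠ 0) (c : K) :
    (Finset.univ.filter fun v : Fin s → K => (∑ i, a i * v i) + c ≠ 0).card
      = (q - 1) * q ^ (s - 1) := by
  obtain ⟨i0, hi0⟩ : ∃ i, a i ≠ 0 := by
    by_contra h; push_neg at h; exact ha (funext h)
  have hs : 1 ≤ s := i0.pos
  set f : (Fin s → K) → K := fun v => ∑ i, a i * v i with hf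
  set w : Fin s → K := fun i => if i = i0 then (a i0)⁻¹ else 0 with hw
  have hfw : f w = 1 := by
    simp only [hf, hw, mul_ite, mul_zero]
    rw [Finset.sum_ite_eq' Finset.univ i0 (fun i => a i * (a i0)⁻¹)]
    simp [mul_inv_cancel₀ hi0]
  have hshift : ∀ (t : K) (v : Fin s → K), f (fun i => v i + t * w i) = f v + t := by
    intro t v
    have : ∑ i, a i * (v i + t * w i) = (∑ i, a i * v i) + t * ∑ i, a i * w i := by
      rw [Finset.mul_sum, ← Finset.sum_add_distrib]
      exact Finset.sum_congr rfl (fun i _ => by ring)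
    simp only [hf] at this ⊢
    rw [this, show (∑ i, a i * w i) = 1 from hfw, mul_one]
  have hfiber : ∀ t : K, (Finset.univ.filter fun v => f v = t).card
      = (Finset.univ.filter fun v => f v = 0).card := by
    intro t
    apply Finset.card_bij' (fun v _ => fun i => v i + (-t) * w i)
      (fun v _ => fun i => v i + t * w i)
    · intro v hv
      simp only [Finset.mem_filter, Finset.mem_univ, true_and] at hv ⊢
      rw [hshift, hv]; ring
    · intro v hv
      simp only [Finset.mem_filter, Finset.mem_univ, true_and] at hv ⊢
      rw [hshift, hv]; ring
    · intro v _; funext i; ring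
    · intro v _; funext i; ring
  have hcard : Fintype.card (Fin s → K) = q ^ s := by
    simp [hq]
  have htotal : q ^ s = ∑ t : K, (Finset.univ.filter fun v => f v = t).card := by
    rw [← hcard, ← Finset.card_univ]
    exact Finset.card_eq_sum_card_fiberwise (fun v _ => Finset.mem_univ (f v))
  have hq1 : 0 < q := hq ▸ Fintype.card_pos
  have hN : (Finset.univ.filter fun v => f v = 0).card = q ^ (s - 1) := by
    have h1 : q ^ s = q * (Finset.univ.filter fun v => f v = 0).card := by
      rw [htotal]
      rw [Finset.sum_congr rfl (fun t _ => hfiber t)]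
      simp [Finset.sum_const, Finset.card_univ, hq, mul_comm]
    have h2 : q ^ s = q * q ^ (s - 1) := by
      conv_lhs => rw [show s = (s - 1) + 1 by omega]
      rw [pow_succ]; ring
    exact Nat.eq_of_mul_eq_mul_left hq1 (h1.symm.trans h2)
  have hA : (Finset.univ.filter fun v => f v = -c).card = q ^ (s - 1) :=
    (hfiber (-c)).trans hN
  have hsplit := Finset.card_filter_add_card_filter_not
    (s := (Finset.univ : Finset (Fin s → K))) (p := fun v => f v = -c)
  rw [Finset.card_univ, hcard] at hsplit
  have hEq : (Finset.univ.filter fun v : Fin s → K => (∑ i, a i * v i) + c ≠ 0)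
      = Finset.univ.filter fun v => ¬ (f v = -c) := by
    apply Finset.filter_congr
    intro v _
    simp only [hf, eq_neg_iff_add_eq_zero]
  rw [hEq]
  have h2 : q ^ s = q * q ^ (s - 1) := by
    conv_lhs => rw [show s = (s - 1) + 1 by omega]
    rw [pow_succ]; ring
  have h3 : (q - 1) * q ^ (s - 1) = q * q ^ (s - 1) - q ^ (s - 1) := by
    rw [Nat.sub_mul, one_mul]
  omega

/-- Let `R` be a finite chain ring with maximal ideal `⟨γ⟩` of index
`e = s + 1` and residue field `K` (`|K| = q`), with a set of coset representatives
`T : K → R` and `γ`-adic digit map `d` (so `r = Σ_i T (d r i) * γ^i`).  Let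
`Y : Fin s → Fin (q^s) → K` be the matrix whose columns are all vectors of `K^s`.
The generalized Gray map `φ(r) j = Σ_{i<s} d r i * Y i j + d r s` satisfies:
the Hamming weight of `φ(r)` equals the homogeneous weight of `r`, namely `0` if
`r = 0`, `q^s = q^{e-1}` if `r` is a nonzero element of `⟨γ^{e-1}⟩`, and
`(q-1) q^{s-1} = (q-1) q^{e-2}` otherwise. -/
theorem stmt16 (R K : Type*) [CommRing R] [Fintype R] [IsLocalRing R]
    [Field K] [Fintype K] [DecidableEq K]
    (γ : R) (s : ℕ)
    (hchain : ∀ I J : Ideal R, I ≤ J ∨ J ≤ I)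
    (hmax : IsLocalRing.maximalIdeal R = Ideal.span {γ})
    (hnil : γ ^ (s + 1) = 0) (hne : γ ^ s ≠ 0)
    (q : ℕ) (hq : Fintype.card K = q)
    (T : K → R) (hT0 : T 0 = 0)
    (hTrep : ∀ x y : K, T x - T y ∈ Ideal.span ({γ} : Set R) → x = y)
    (d : R → Fin (s + 1) → K)
    (hd : ∀ r : R, r = ∑ i : Fin (s + 1), T (d r i) * γ ^ (i : ℕ))
    (Y : Fin s → Fin (q ^ s) → K)
    (hY : Function.Bijective (fun j : Fin (q ^ s) => fun i : Fin s => Y i j))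
    (r : R) :
    (Finset.univ.filter (fun j : Fin (q ^ s) =>
        (∑ i : Fin s, d r i.castSucc * Y i j) + d r (Fin.last s) ≠ 0)).card =
      if r = 0 then 0
      else if r ∈ Ideal.span ({γ ^ s} : Set R) then q ^ s
      else (q - 1) * q ^ (s - 1) := by
  have huniq := aux_unique γ s hmax hnil hne T hTrep
  by_cases hr0 : r = 0
  · -- r = 0 : all digits vanish
    have hd0 : d r = 0 := by
      apply huniq
      rw [← hd r, hr0]
      simp [hT0]
    rw [if_pos hr0, Finset.card_eq_zero, Finset.filter_eq_empty_iff]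
    intro j _
    simp [hd0]
  rw [if_neg hr0]
  by_cases hrs : r ∈ Ideal.span ({γ ^ s} : Set R)
  · rw [if_pos hrs]
    rcases Ideal.mem_span_singleton.mp hrs with ⟨x, hx⟩
    set b : Fin (s + 1) → K := fun i => if i = Fin.last s then d x 0 else 0 with hb
    have hrb : d r = b := by
      apply huniq
      rw [← hd r, hx]
      have hR : ∑ i : Fin (s + 1), T (b i) * γ ^ (i : ℕ) = T (d x 0) * γ ^ s := by
        rw [Fin.sum_univ_castSucc]
        have hz : ∀ i : Fin s, T (b i.castSucc) * γ ^ ((i.castSucc : ℕ)) = 0 := by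
          intro i
          have : b i.castSucc = 0 := by
            simp [hb, (Fin.castSucc_lt_last i).ne]
          rw [this, hT0, zero_mul]
        rw [Finset.sum_congr rfl (fun i _ => hz i)]
        simp [hb, Fin.val_last]
      rw [hR]
      conv_lhs => rw [hd x, Finset.mul_sum, Fin.sum_univ_succ]
      have hz2 : ∀ i : Fin s, γ ^ s * (T (d x i.succ) * γ ^ ((i.succ : ℕ))) = 0 := by
        intro i
        have h0 : γ ^ (s + ((i.succ : ℕ))) = 0 :=
          pow_eq_zero_of_le (by simp [Fin.val_succ]) hnil
        calc γ ^ s * (T (d x i.succ) * γ ^ ((i.succ : ℕ)))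
            = T (d x i.succ) * γ ^ (s + ((i.succ : ℕ))) := by rw [pow_add]; ring
          _ = 0 := by rw [h0, mul_zero]
      rw [Finset.sum_congr rfl (fun i _ => hz2 i)]
      simp
      ring
    have hc : d r (Fin.last s) ≠ 0 := by
      intro hc0
      apply hr0
      have hball : ∀ i, b i = 0 := by
        intro i
        by_cases hi : i = Fin.last s
        · rw [hi, ← congrFun hrb (Fin.last s)]; exact hc0
        · simp [hb, hi]
      calc r = ∑ i : Fin (s + 1), T (d r i) * γ ^ (i : ℕ) := hd r
        _ = 0 := by rw [hrb]; simp [hball, hT0]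
    have hcond : ∀ j : Fin (q ^ s),
        (∑ i : Fin s, d r i.castSucc * Y i j) + d r (Fin.last s) ≠ 0 := by
      intro j
      have hz : ∀ i : Fin s, d r i.castSucc = 0 := by
        intro i
        rw [hrb]
        simp [hb, (Fin.castSucc_lt_last i).ne]
      simp [hz, hc]
    rw [Finset.filter_true_of_mem (fun j _ => hcond j), Finset.card_univ, Fintype.card_fin]
  · rw [if_neg hrs]
    set a : Fin s → K := fun i => d r i.castSucc with ha'
    have ha : a ≠ 0 := by
      intro h0
      apply hrs
      have hr : r = T (d r (Fin.last s)) * γ ^ s := by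
        conv_lhs => rw [hd r]
        rw [Fin.sum_univ_castSucc]
        have hz : ∀ i : Fin s, T (d r i.castSucc) * γ ^ ((i.castSucc : ℕ)) = 0 := by
          intro i
          have : d r i.castSucc = 0 := congrFun h0 i
          rw [this, hT0, zero_mul]
        rw [Finset.sum_congr rfl (fun i _ => hz i)]
        simp [Fin.val_last]
      rw [Ideal.mem_span_singleton]
      exact ⟨T (d r (Fin.last s)), by rw [mul_comm]; exact hr⟩
    set e : Fin (q ^ s) ≃ (Fin s → K) := Equiv.ofBijective _ hY with he
    have htrans := aux_filter_equiv e
      (fun v : Fin s → K => (∑ i : Fin s, a i * v i) + d r (Fin.last s) ≠ 0)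
    have hcnt := aux_count hq a ha (d r (Fin.last s))
    exact htrans.trans hcnt
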